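/- arXiv:2209.15120 — 9 statements merged into one kernel-verified Lean document; each statement's English description precedes it below -/
import Mathlib

section
/- Let k ≥ 2 and let n be a positive integer. Suppose a, b, c, d are positive integers with a < b and c < d such that each of ac + n, bc + n, ad + n, and bd + n is a perfect k-th power. Then bd ≥ k^k · n^(−k) · (ac)^(k−1), i.e., n^k · bd ≥ k^k · (ac)^(k−1). -/
/-!
With `X = x w` and `Y = y z` the products of the roots of `ac + n, bd + n` and of
`bc + n, ad + n`, one has `X ^ k - Y ^ k = n (b - a) (d - c) > 0`. Hence `X ≥ Y + 1`, and
Bernoulli's inequality gives `k Y ^ (k - 1) ≤ n (b - a) (d - c) ≤ n bd`. Raising this to the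
`k`-th power and using `Y ^ k ≥ bc · ad = ac · bd` eliminates `Y`; a factor `(bd) ^ (k - 1)`
then cancels.
-/

namespace Nat

theorem mul_pow_sub_one_le_of_pow_add_eq {k X Y M : ℕ} (h : Y ^ k + M = X ^ k) (hM : 0 < M) :
    k * Y ^ (k - 1) ≤ M := by
  have hYX : Y < X := lt_of_pow_lt_pow_left₀ k (zero_le X) (by omega)
  have hbernoulli : Y ^ k + k * Y ^ (k - 1) ≤ X ^ k :=
    calc Y ^ k + k * Y ^ (k - 1) = Y ^ k + k * Y ^ (k - 1) * 1 := by rw [mul_one]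
      _ ≤ (Y + 1) ^ k := pow_add_mul_le_add_pow (zero_le Y) (zero_le _) k
      _ ≤ X ^ k := Nat.pow_le_pow_left hYX k
  omega

theorem pow_mul_pow_sub_one_le_pow_mul {k n P Q Y : ℕ} (hk : k ≠ 0) (hQ : 0 < Q)
    (hP : P * Q ≤ Y ^ k) (hY : k * Y ^ (k - 1) ≤ n * Q) :
    k ^ k * P ^ (k - 1) ≤ n ^ k * Q := by
  refine Nat.le_of_mul_le_mul_right ?_ (pow_pos hQ (k - 1))
  calc k ^ k * P ^ (k - 1) * Q ^ (k - 1) = k ^ k * (P * Q) ^ (k - 1) := by ring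
    _ ≤ k ^ k * (Y ^ k) ^ (k - 1) := by gcongr
    _ = (k * Y ^ (k - 1)) ^ k := by
      rw [mul_pow, ← pow_mul, ← pow_mul, Nat.mul_comm (k - 1) k]
    _ ≤ (n * Q) ^ k := by gcongr
    _ = n ^ k * Q * Q ^ (k - 1) := by
      rw [mul_pow, Nat.mul_assoc, ← _root_.pow_succ', Nat.sub_one_add_one hk]

end Nat

theorem stmt_4_general (k n a b c d : ℕ) (hk : 2 ≤ k) (hn : 0 < n)
    (hab : a < b) (hcd : c < d)
    (h1 : ∃ x : ℕ, a * c + n = x ^ k) (h2 : ∃ x : ℕ, b * c + n = x ^ k)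
    (h3 : ∃ x : ℕ, a * d + n = x ^ k) (h4 : ∃ x : ℕ, b * d + n = x ^ k) :
    k ^ k * (a * c) ^ (k - 1) ≤ n ^ k * (b * d) := by
  obtain ⟨x, hx⟩ := h1
  obtain ⟨y, hy⟩ := h2
  obtain ⟨z, hz⟩ := h3
  obtain ⟨w, hw⟩ := h4
  obtain ⟨s, rfl⟩ := Nat.exists_eq_add_of_lt hab
  obtain ⟨t, rfl⟩ := Nat.exists_eq_add_of_lt hcd
  have hgap : (y * z) ^ k + n * ((s + 1) * (t + 1)) = (x * w) ^ k := by
    rw [mul_pow, mul_pow, ← hx, ← hy, ← hz, ← hw]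
    ring
  refine Nat.pow_mul_pow_sub_one_le_pow_mul (Y := y * z) (by omega) (by positivity) ?_ ?_
  · calc a * c * ((a + s + 1) * (c + t + 1)) = (a + s + 1) * c * (a * (c + t + 1)) := by ring
      _ ≤ ((a + s + 1) * c + n) * (a * (c + t + 1) + n) := by gcongr <;> omega
      _ = (y * z) ^ k := by rw [hy, hz, mul_pow]
  · calc k * (y * z) ^ (k - 1) ≤ n * ((s + 1) * (t + 1)) :=
        Nat.mul_pow_sub_one_le_of_pow_add_eq hgap (by positivity)
      _ ≤ n * ((a + s + 1) * (c + t + 1)) := by gcongr <;> omega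

/-- gap principle for positive n: if a < b, c < d are positive integers
and ac+n, bc+n, ad+n, bd+n are all perfect k-th powers (k ≥ 2, n > 0), then
n^k·bd ≥ k^k·(ac)^(k−1). -/
theorem stmt_4 (k n a b c d : ℕ) (hk : 2 ≤ k) (hn : 0 < n)
    (ha : 0 < a) (hc : 0 < c) (hab : a < b) (hcd : c < d)
    (h1 : ∃ x : ℕ, a * c + n = x ^ k) (h2 : ∃ x : ℕ, b * c + n = x ^ k)
    (h3 : ∃ x : ℕ, a * d + n = x ^ k) (h4 : ∃ x : ℕ, b * d + n = x ^ k) :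
    k ^ k * (a * c) ^ (k - 1) ≤ n ^ k * (b * d) :=
  stmt_4_general k n a b c d hk hn hab hcd h1 h2 h3 h4
end

section
/- Let k ≥ 3 and m ≥ 5 be integers and let n be a positive integer. Suppose a₁ < a₂ < ... < a_m are positive integers with n³ ≤ a₁ such that the set {a₁, a₂, ..., a_m} has property D_k(n). Then for every integer j with 1 ≤ j ≤ (m − 2)/3, one has a_{2+3j} ≥ a₂^((k−1)^j). -/
lemma gap_lemma (k n a b c d : ℕ) (hk : 3 ≤ k) (hn : 0 < n)
    (hn3 : n ^ 3 ≤ a) (hab : a < b) (hbc : b < c) (hcd : c < d)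
    (hp : ∃ p : ℕ, a*c+n = p^k) (hq : ∃ q : ℕ, a*d+n = q^k)
    (hr : ∃ r : ℕ, b*c+n = r^k) (hs : ∃ s : ℕ, b*d+n = s^k) :
    a ^ (k-1) ≤ d := by
  obtain ⟨K, rfl⟩ : ∃ K, k = K + 3 := ⟨k - 3, by omega⟩
  obtain ⟨p, hp⟩ := hp
  obtain ⟨q, hq⟩ := hq
  obtain ⟨r, hr⟩ := hr
  obtain ⟨s, hs⟩ := hs
  have ha : 0 < a := lt_of_lt_of_le (pow_pos hn 3) hn3
  have hb : 0 < b := lt_trans ha hab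
  have hd : 0 < d := by omega
  -- Step A : (q*r)^(K+3) < (p*s)^(K+3)
  have hA : (q*r)^(K+3) < (p*s)^(K+3) := by
    rw [mul_pow, mul_pow, ← hp, ← hq, ← hr, ← hs]
    have hab' : (a:ℤ) < b := by exact_mod_cast hab
    have hcd' : (c:ℤ) < d := by exact_mod_cast hcd
    have hn' : (0:ℤ) < n := by exact_mod_cast hn
    zify
    nlinarith [mul_pos (sub_pos.mpr hab') (sub_pos.mpr hcd')]
  have hlt : q*r < p*s := by
    exact (Nat.pow_lt_pow_iff_left (by omega)).mp hA
  -- Step B : (p*s)^(K+3) ≤ (q*r)^(K+3) + n*(b*d)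
  have hB : (p*s)^(K+3) ≤ (q*r)^(K+3) + n*(b*d) := by
    rw [mul_pow, mul_pow, ← hp, ← hq, ← hr, ← hs]
    have hcd' : (c:ℤ) ≤ d := by exact_mod_cast le_of_lt hcd
    have hn' : (0:ℤ) ≤ n := by positivity
    have ha' : (0:ℤ) ≤ a := by positivity
    zify
    have hb' : (0:ℤ) ≤ b := by positivity
    have hc' : (0:ℤ) ≤ c := by positivity
    nlinarith [mul_nonneg (mul_nonneg ha' hn') (sub_nonneg.mpr hcd'),
      mul_nonneg (mul_nonneg hn' hb') hc']
  -- Step C : (q*r)^(K+2) ≤ n*(b*d)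
  have hC : (q*r)^(K+2) ≤ n*(b*d) := by
    have h1 : (q*r+1)^(K+3) ≤ (p*s)^(K+3) :=
      Nat.pow_le_pow_left (by omega) _
    have h2 : (q*r+1)*(q*r)^(K+2) ≤ (q*r+1)^(K+3) := by
      have : (q*r+1)^(K+3) = (q*r+1)*(q*r+1)^(K+2) := by ring
      rw [this]
      exact Nat.mul_le_mul_left _ (Nat.pow_le_pow_left (by omega) _)
    have h3 : (q*r+1)*(q*r)^(K+2) = (q*r)^(K+3) + (q*r)^(K+2) := by ring
    omega
  -- Step D : a*b*c*d ≤ (q*r)^(K+3)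
  have hD' : a*c*(b*d) ≤ (q*r)^(K+3) := by
    rw [mul_pow, ← hq, ← hr]
    calc a*c*(b*d) = (a*d)*(b*c) := by ring
    _ ≤ (a*d+n)*(b*c+n) := Nat.mul_le_mul (by omega) (by omega)
  -- Step E : (a*c*(b*d))^(K+2) ≤ (n*(b*d))^(K+3)
  have hE : (a*c*(b*d))^(K+2) ≤ (n*(b*d))^(K+3) := by
    calc (a*c*(b*d))^(K+2) ≤ ((q*r)^(K+3))^(K+2) := Nat.pow_le_pow_left hD' _
    _ = ((q*r)^(K+2))^(K+3) := by rw [← pow_mul, ← pow_mul, Nat.mul_comm (K+3)]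
    _ ≤ (n*(b*d))^(K+3) := Nat.pow_le_pow_left hC _
  -- Step F : (a*c)^(K+2) ≤ n^(K+3)*(b*d)
  have hF : (a*c)^(K+2) ≤ n^(K+3)*(b*d) := by
    have hpos : 0 < (b*d)^(K+2) := pow_pos (Nat.mul_pos hb hd) _
    have : (a*c)^(K+2) * (b*d)^(K+2) ≤ (n^(K+3)*(b*d)) * (b*d)^(K+2) := by
      calc (a*c)^(K+2) * (b*d)^(K+2) = (a*c*(b*d))^(K+2) := (mul_pow _ _ _).symm
      _ ≤ (n*(b*d))^(K+3) := hE
      _ = (n^(K+3)*(b*d)) * (b*d)^(K+2) := by rw [mul_pow]; ring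
    exact Nat.le_of_mul_le_mul_right this hpos
  -- Step G : a^(2*K+3) ≤ n^(K+3)*d
  have hG : a^(2*K+3) ≤ n^(K+3)*d := by
    have h1 : a^(K+2) * (a^(K+1)*b) ≤ (a*c)^(K+2) := by
      have hc1 : a^(K+1)*b ≤ c^(K+2) := by
        calc a^(K+1)*b ≤ c^(K+1)*c :=
          Nat.mul_le_mul (Nat.pow_le_pow_left (by omega) _) (by omega)
        _ = c^(K+2) := by ring
      calc a^(K+2) * (a^(K+1)*b) ≤ a^(K+2) * c^(K+2) := Nat.mul_le_mul_left _ hc1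
      _ = (a*c)^(K+2) := (mul_pow _ _ _).symm
    have h2 : a^(2*K+3) * b ≤ n^(K+3)*d * b := by
      calc a^(2*K+3) * b = a^(K+2) * (a^(K+1)*b) := by ring
      _ ≤ (a*c)^(K+2) := h1
      _ ≤ n^(K+3)*(b*d) := hF
      _ = n^(K+3)*d*b := by ring
    exact Nat.le_of_mul_le_mul_right h2 hb
  -- Step H : conclude
  have hH : (a^(K+2))^3 ≤ d^3 := by
    have h1 : (a^(2*K+3))^3 ≤ (n^(K+3))^3 * d^3 := by
      calc (a^(2*K+3))^3 ≤ (n^(K+3)*d)^3 := Nat.pow_le_pow_left hG 3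
      _ = (n^(K+3))^3 * d^3 := mul_pow _ _ _
    have h2 : (n^(K+3))^3 = (n^3)^(K+3) := by rw [← pow_mul, ← pow_mul, Nat.mul_comm (K+3)]
    have h3 : (n^3)^(K+3) ≤ a^(K+3) := Nat.pow_le_pow_left hn3 _
    have h4 : a^(6*K+9) ≤ a^(K+3) * d^3 := by
      calc a^(6*K+9) = (a^(2*K+3))^3 := by ring
      _ ≤ (n^(K+3))^3 * d^3 := h1
      _ = (n^3)^(K+3) * d^3 := by rw [h2]
      _ ≤ a^(K+3) * d^3 := Nat.mul_le_mul_right _ h3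
    have h5 : a^(K+3) * (a^(K+2))^3 ≤ a^(K+3) * d^3 := by
      calc a^(K+3) * (a^(K+2))^3 = a^(2*K+9) * a^(2*K) := by ring
      _ ≤ a^(2*K+9) * a^(4*K) := Nat.mul_le_mul_left _ (Nat.pow_le_pow_right ha (by omega))
      _ = a^(6*K+9) := by ring
      _ ≤ a^(K+3) * d^3 := h4
    exact Nat.le_of_mul_le_mul_left h5 (pow_pos ha _)
  have : a^(K+2) ≤ d := (Nat.pow_le_pow_iff_left (by omega)).mp hH
  have hke : K + 3 - 1 = K + 2 := by omega
  rw [hke]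
  exact this

/-- super-exponential growth. Let k ≥ 3, m ≥ 5, n > 0 and let
a₁ < a₂ < ... < a_m be positive integers with n³ ≤ a₁ such that {a₁,...,a_m} has
property D_k(n). Then a_{2+3j} ≥ a₂^((k−1)^j) for 1 ≤ j ≤ (m−2)/3. -/
theorem stmt_5 (k m n : ℕ) (hk : 3 ≤ k) (hm : 5 ≤ m) (hn : 0 < n)
    (a : ℕ → ℕ) (hpos : ∀ i, 1 ≤ i → i ≤ m → 0 < a i)
    (hmono : ∀ i j, 1 ≤ i → i < j → j ≤ m → a i < a j)
    (hfirst : n ^ 3 ≤ a 1)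
    (hD : ∀ i j, 1 ≤ i → i < j → j ≤ m → ∃ c : ℕ, a i * a j + n = c ^ k) :
    ∀ j, 1 ≤ j → j ≤ (m - 2) / 3 → a 2 ^ ((k - 1) ^ j) ≤ a (2 + 3 * j) := by
  have key : ∀ j, 2 + 3 * j ≤ m → a 2 ^ ((k - 1) ^ j) ≤ a (2 + 3 * j) := by
    intro j
    induction j with
    | zero => intro _; simp
    | succ j ih =>
      intro hj
      have hj' : 2 + 3 * j ≤ m := by omega
      set i := 2 + 3 * j with hi
      have hi3 : 2 + 3 * (j + 1) = i + 3 := by omega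
      have h1 : a 1 < a i := hmono 1 i (by omega) (by omega) (by omega)
      have hgap : a i ^ (k - 1) ≤ a (i + 3) :=
        gap_lemma k n (a i) (a (i+1)) (a (i+2)) (a (i+3)) hk hn
          (le_trans hfirst h1.le)
          (hmono i (i+1) (by omega) (by omega) (by omega))
          (hmono (i+1) (i+2) (by omega) (by omega) (by omega))
          (hmono (i+2) (i+3) (by omega) (by omega) (by omega))
          (hD i (i+2) (by omega) (by omega) (by omega))
          (hD i (i+3) (by omega) (by omega) (by omega))
          (hD (i+1) (i+2) (by omega) (by omega) (by omega))
          (hD (i+1) (i+3) (by omega) (by omega) (by omega))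
      rw [hi3]
      calc a 2 ^ (k - 1) ^ (j + 1) = (a 2 ^ (k - 1) ^ j) ^ (k - 1) := by
            rw [← pow_mul, pow_succ]
        _ ≤ (a i) ^ (k - 1) := Nat.pow_le_pow_left (ih hj') _
        _ ≤ a (i + 3) := hgap
  intro j hj1 hj2
  apply key
  have h3 : j * 3 ≤ m - 2 := (Nat.le_div_iff_mul_le (by norm_num)).mp hj2
  omega
end

section
/- Let n be a positive integer and let a, b, c, d be positive integers with n³ ≤ a < b < c < d. Then (ac − n)(bd − n) ≥ abcd/2. -/
/-- if n > 0 and n³ ≤ a < b < c < d then (ac − n)(bd − n) ≥ abcd/2,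
i.e. 2(ac − n)(bd − n) ≥ abcd as integers. -/
theorem stmt_6 (n a b c d : ℕ) (hn : 0 < n) (h1 : n ^ 3 ≤ a)
    (hab : a < b) (hbc : b < c) (hcd : c < d) :
    (a * b * c * d : ℤ) ≤ 2 * ((a * c : ℤ) - n) * ((b * d : ℤ) - n) := by
  have hna : (n : ℤ) ≤ a := by
    have : n ≤ a := le_trans (Nat.le_self_pow (by norm_num) n) h1
    exact_mod_cast this
  have hn1 : (1 : ℤ) ≤ n := by exact_mod_cast hn
  have hb : (a : ℤ) + 1 ≤ b := by exact_mod_cast hab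
  have hc : (a : ℤ) + 2 ≤ c := by
    have : a + 2 ≤ c := by omega
    exact_mod_cast this
  have hd : (a : ℤ) + 3 ≤ d := by
    have : a + 3 ≤ d := by omega
    exact_mod_cast this
  -- ac ≥ n(n+2), bd ≥ (n+1)(n+3)
  have hac : (n : ℤ) * (n + 2) ≤ a * c := by nlinarith
  have hbd : ((n : ℤ) + 1) * (n + 3) ≤ b * d := by nlinarith
  nlinarith [mul_le_mul hac hbd (by positivity) (by nlinarith),
    sq_nonneg ((n : ℤ)), sq_nonneg ((n : ℤ) - 1)]
end

section
/- Let n be a positive integer and k ≥ 2 an integer. Suppose a, b, c, d are positive integers with n³ ≤ a < b < c < d such that each of ac − n, bc − n, ad − n, and bd − n is a perfect k-th power. Then bd ≥ k^k · 2^(−k) · n^(−k) · (ac)^(k−1), i.e., (2n)^k · bd ≥ k^k · (ac)^(k−1). -/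
/-!
Write `ac = w^k + n`, `bc = x^k + n`, `ad = y^k + n`, `bd = z^k + n`. Since `(ac)(bd) = (bc)(ad)`,
`(xy)^k - (wz)^k = n(b - a)(d - c)`, which is positive and at most `n z^k`. Hence `xy ≥ wz + 1`, and
Bernoulli's inequality gives `k (wz)^(k-1) ≤ n z^k`, i.e. `k w^(k-1) ≤ n z`. Raising this to the
`k`-th power and using `ac ≤ 2 w^k` (as `ac ≥ 2n`, because `a ≥ n^3`) yields the bound.
-/

theorem shifted_products_identity {R : Type*} [CommRing R] {a b c d n W X Y Z : R}
    (hW : a * c - n = W) (hX : b * c - n = X) (hY : a * d - n = Y) (hZ : b * d - n = Z) :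
    X * Y - W * Z = n * (b - a) * (d - c) := by
  subst hW hX hY hZ; ring

theorem Nat.mul_pow_pred_le_of_pow_lt_of_pow_le {k m M N : ℕ} (hlt : m ^ k < M ^ k)
    (hle : M ^ k ≤ m ^ k + N) : k * m ^ (k - 1) ≤ N := by
  have hmM : m + 1 ≤ M := lt_of_pow_lt_pow_left₀ k (Nat.zero_le M) hlt
  have bernoulli : m ^ k + k * m ^ (k - 1) ≤ (m + 1) ^ k := by
    simpa using pow_add_mul_le_add_pow (zero_le m) (zero_le (2 * m + 1)) k
  have := Nat.pow_le_pow_left hmM k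
  omega

theorem mul_pow_pred_le_mul_of_shifted_products {k n a b c d w x y z : ℕ} (hn : 0 < n)
    (hab : a < b) (hcd : c < d)
    (hw : (a * c : ℤ) - n = (w : ℤ) ^ k) (hx : (b * c : ℤ) - n = (x : ℤ) ^ k)
    (hy : (a * d : ℤ) - n = (y : ℤ) ^ k) (hz : (b * d : ℤ) - n = (z : ℤ) ^ k) :
    k * w ^ (k - 1) ≤ n * z := by
  rcases k.eq_zero_or_pos with rfl | hk
  · simp
  have hgap := shifted_products_identity hw hx hy hz
  have hba : (0 : ℤ) < b - a := by push_cast [sub_pos]; exact_mod_cast hab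
  have hdc : (0 : ℤ) < d - c := by push_cast [sub_pos]; exact_mod_cast hcd
  -- `(b - a) * (d - c) = z^k + w^k - x^k - y^k` and `w^k ≤ x^k`
  have hgap_le : ((b : ℤ) - a) * (d - c) ≤ z ^ k := by
    nlinarith [pow_nonneg (Nat.cast_nonneg (α := ℤ) y) k]
  have hzk : k * (w * z) ^ (k - 1) ≤ n * z ^ k := by
    refine Nat.mul_pow_pred_le_of_pow_lt_of_pow_le (M := x * y) ?_ ?_ <;>
    · zify; rw [mul_pow, mul_pow]; nlinarith [mul_pos (mul_pos (Nat.cast_pos.2 hn) hba) hdc]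
  have hz : 0 < z := by
    have : (0 : ℤ) < z ^ k := by nlinarith [pow_nonneg (Nat.cast_nonneg (α := ℤ) w) k]
    exact Nat.pos_of_ne_zero (by rintro rfl; simp [hk.ne'] at this)
  have hz_pow : z ^ k = z * z ^ (k - 1) := by rw [← pow_succ', Nat.sub_add_cancel hk]
  rw [mul_pow, hz_pow, ← mul_assoc, ← mul_assoc] at hzk
  exact Nat.le_of_mul_le_mul_right hzk (pow_pos hz _)

theorem stmt_7_general (k n a b c d : ℕ) (hn : 0 < n)
    (h1 : n ^ 3 ≤ a) (hab : a < b) (hbc : b < c) (hcd : c < d)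
    (hac : ∃ x : ℕ, (a * c : ℤ) - n = (x : ℤ) ^ k)
    (hbcn : ∃ x : ℕ, (b * c : ℤ) - n = (x : ℤ) ^ k)
    (had : ∃ x : ℕ, (a * d : ℤ) - n = (x : ℤ) ^ k)
    (hbd : ∃ x : ℕ, (b * d : ℤ) - n = (x : ℤ) ^ k) :
    k ^ k * (a * c) ^ (k - 1) ≤ (2 * n) ^ k * (b * d) := by
  obtain ⟨w, hw⟩ := hac
  obtain ⟨x, hx⟩ := hbcn
  obtain ⟨y, hy⟩ := had
  obtain ⟨z, hz⟩ := hbd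
  have hkey : k * w ^ (k - 1) ≤ n * z :=
    mul_pow_pred_le_mul_of_shifted_products hn hab hcd hw hx hy hz
  have hna : n ≤ a := (Nat.le_self_pow (by norm_num) n).trans h1
  have hac : a * c ≤ 2 * w ^ k := by
    have : 2 * n ≤ a * c := by nlinarith
    zify at this ⊢; linarith
  have hbd : z ^ k ≤ b * d := by zify; linarith
  calc k ^ k * (a * c) ^ (k - 1)
      ≤ k ^ k * (2 * w ^ k) ^ (k - 1) := by gcongr
    _ = 2 ^ (k - 1) * (k * w ^ (k - 1)) ^ k := by
      rw [mul_pow, mul_pow, ← pow_mul, ← pow_mul, mul_comm k]; ring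
    _ ≤ 2 ^ (k - 1) * (n * z) ^ k := by gcongr
    _ ≤ 2 ^ k * (n ^ k * (b * d)) := by rw [mul_pow]; gcongr <;> omega
    _ = (2 * n) ^ k * (b * d) := by ring

/-- gap principle for negative n. If n > 0, k ≥ 2, n³ ≤ a < b < c < d and
ac − n, bc − n, ad − n, bd − n are all perfect k-th powers, then
bd ≥ k^k·2^(−k)·n^(−k)·(ac)^(k−1), i.e. (2n)^k·bd ≥ k^k·(ac)^(k−1). -/
theorem stmt_7 (k n a b c d : ℕ) (hk : 2 ≤ k) (hn : 0 < n)
    (h1 : n ^ 3 ≤ a) (hab : a < b) (hbc : b < c) (hcd : c < d)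
    (hac : ∃ x : ℕ, (a * c : ℤ) - n = (x : ℤ) ^ k)
    (hbcn : ∃ x : ℕ, (b * c : ℤ) - n = (x : ℤ) ^ k)
    (had : ∃ x : ℕ, (a * d : ℤ) - n = (x : ℤ) ^ k)
    (hbd : ∃ x : ℕ, (b * d : ℤ) - n = (x : ℤ) ^ k) :
    k ^ k * (a * c) ^ (k - 1) ≤ (2 * n) ^ k * (b * d) :=
  stmt_7_general k n a b c d hn h1 hab hbc hcd hac hbcn had hbd
end

section
/- Let k ≥ 3 be an integer and n a positive integer. If a, b, c, d, e are positive integers with n³ ≤ a < b < c < d < e such that the set {a, b, c, d, e} has property D_k(−n), then e ≥ b^(k−1). -/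
/-!
Write `b e = q^k + n`, `c d = w^k + n`, `c e = r^k + n`, `b d = v^k + n`. Expanding,
`(q w)^k - (r v)^k = n (c - b)(e - d) > 0`, so `q w > r v` and the gap between these two
`k`-th powers is at least `k (r v)^(k-1)`; hence `3 (r v)^(k-1) ≤ n c e`. On the other hand
`(r v)^k` is at least `3/5` of `b c d e` since `n < b`, and combining the two bounds gives
`(b c d e)^(k-1) < (n c e)^k`. But if `e < b^(k-1)`, then `n^3 ≤ d` and `c < d` give
`(n c e)^k ≤ (b c d e)^(k-1)`.
-/

open Finset in
theorem Nat.mul_pow_pred_le_pow_sub_pow {x y : ℕ} (h : x < y) (k : ℕ) :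
    k * x ^ (k - 1) ≤ y ^ k - x ^ k :=
  calc k * x ^ (k - 1) = ∑ i ∈ range k, x ^ i * x ^ (k - 1 - i) := by
        rw [geom_sum₂_self, Nat.cast_id]
    _ ≤ ∑ i ∈ range k, y ^ i * x ^ (k - 1 - i) :=
        sum_le_sum fun i _ => Nat.mul_le_mul_right _ (Nat.pow_le_pow_left h.le i)
    _ ≤ (∑ i ∈ range k, y ^ i * x ^ (k - 1 - i)) * (y - x) :=
        Nat.le_mul_of_pos_right _ (Nat.sub_pos_of_lt h)
    _ = y ^ k - x ^ k := geom_sum₂_mul_of_ge h.le k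

theorem mul_pow_pred_le_of_pow_eq_pow_add {x y N k : ℕ} (hN : 0 < N)
    (h : y ^ k = x ^ k + N) : k * x ^ (k - 1) ≤ N := by
  have hxy : x < y := lt_of_pow_lt_pow_left₀ k (Nat.zero_le y) (by omega)
  have := Nat.mul_pow_pred_le_pow_sub_pow hxy k
  omega

theorem mul_eq_mul_add_of_mul_eq_add {n b c d e Q W R V : ℕ} (hbc : b ≤ c) (hde : d ≤ e)
    (hQ : b * e = Q + n) (hW : c * d = W + n) (hR : c * e = R + n) (hV : b * d = V + n) :
    Q * W = R * V + n * ((c - b) * (e - d)) := by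
  zify [hbc, hde] at hQ hW hR hV ⊢
  linear_combination
    (V : ℤ) * hR + (c * e - n : ℤ) * hV - (W : ℤ) * hQ - (b * e - n : ℤ) * hW

theorem three_mul_le_five_mul_of_mul_eq_add {n b c d e R V : ℕ} (hnb : n ≤ b) (hnc : n ≤ c)
    (hd : 4 ≤ d) (he : 5 ≤ e) (hR : c * e = R + n) (hV : b * d = V + n) :
    3 * (b * c * d * e) ≤ 5 * (R * V) := by
  have hR' : c * (e - 1) ≤ R := by
    zify [show 1 ≤ e by omega] at hR ⊢; nlinarith
  have hV' : b * (d - 1) ≤ V := by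
    zify [show 1 ≤ d by omega] at hV ⊢; nlinarith
  have hde : 3 * (d * e) ≤ 5 * ((d - 1) * (e - 1)) := by
    zify [show 1 ≤ d by omega, show 1 ≤ e by omega]; nlinarith
  calc 3 * (b * c * d * e) = b * c * (3 * (d * e)) := by ring
    _ ≤ b * c * (5 * ((d - 1) * (e - 1))) := Nat.mul_le_mul_left _ hde
    _ = 5 * (c * (e - 1) * (b * (d - 1))) := by ring
    _ ≤ 5 * (R * V) := Nat.mul_le_mul_left 5 (Nat.mul_le_mul hR' hV')

theorem pow_pred_lt_pow_of_three_mul_le {k X M P : ℕ} (hk : 1 ≤ k) (hM : 3 * X ^ (k - 1) ≤ M)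
    (hP : 3 * P ≤ 5 * X ^ k) (hP0 : 0 < P) : P ^ (k - 1) < M ^ k := by
  have hXM : 3 ^ k * X ^ (k * (k - 1)) ≤ M ^ k := by
    rw [pow_mul', ← mul_pow]; exact Nat.pow_le_pow_left hM k
  have hPX : 3 ^ (k - 1) * P ^ (k - 1) ≤ 5 ^ (k - 1) * X ^ (k * (k - 1)) := by
    rw [← mul_pow, pow_mul, ← mul_pow]; exact Nat.pow_le_pow_left hP (k - 1)
  have h53 : 5 ^ (k - 1) < 3 ^ k * 3 ^ (k - 1) :=
    calc 5 ^ (k - 1) ≤ 3 ^ (k - 1) * 3 ^ (k - 1) := by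
          rw [← mul_pow]; exact Nat.pow_le_pow_left (by norm_num) _
      _ < 3 ^ k * 3 ^ (k - 1) :=
          Nat.mul_lt_mul_of_pos_right (Nat.pow_lt_pow_right (by norm_num) (by omega))
            (by positivity)
  refine Nat.lt_of_mul_lt_mul_left (a := 5 ^ (k - 1)) ?_
  calc 5 ^ (k - 1) * P ^ (k - 1) < 3 ^ k * 3 ^ (k - 1) * P ^ (k - 1) :=
        Nat.mul_lt_mul_of_pos_right h53 (by positivity)
    _ ≤ 3 ^ k * (5 ^ (k - 1) * X ^ (k * (k - 1))) := by
        rw [mul_assoc]; exact Nat.mul_le_mul_left _ hPX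
    _ = 5 ^ (k - 1) * (3 ^ k * X ^ (k * (k - 1))) := by ring
    _ ≤ 5 ^ (k - 1) * M ^ k := Nat.mul_le_mul_left _ hXM

theorem pow_le_pow_pred_of_le_pow_pred {k n b c d e : ℕ} (hk : 3 ≤ k) (hn : n ^ 3 ≤ d)
    (hcd : c ≤ d) (he : e ≤ b ^ (k - 1)) : (n * (c * e)) ^ k ≤ (b * c * d * e) ^ (k - 1) := by
  obtain ⟨m, rfl⟩ : ∃ m, k = m + 3 := ⟨k - 3, by omega⟩
  have hnd : n ^ (m + 3) ≤ d ^ (m + 1) := by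
    rcases n.eq_zero_or_pos with rfl | hn0
    · simp
    calc n ^ (m + 3) ≤ (n ^ 3) ^ (m + 1) := by
          rw [← pow_mul]; exact Nat.pow_le_pow_right hn0 (by omega)
      _ ≤ d ^ (m + 1) := Nat.pow_le_pow_left hn _
  change e ≤ b ^ (m + 2) at he
  change (n * (c * e)) ^ (m + 3) ≤ (b * c * d * e) ^ (m + 2)
  calc (n * (c * e)) ^ (m + 3) = n ^ (m + 3) * (c ^ (m + 2) * c) * (e ^ (m + 2) * e) := by ring
    _ ≤ d ^ (m + 1) * (c ^ (m + 2) * d) * (e ^ (m + 2) * b ^ (m + 2)) := by gcongr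
    _ = (b * c * d * e) ^ (m + 2) := by ring

/-- if k ≥ 3, n > 0 and n³ ≤ a < b < c < d < e are positive integers such
that {a,b,c,d,e} has property D_k(−n), then e ≥ b^(k−1). -/
theorem stmt_8 (k n a b c d e : ℕ) (hk : 3 ≤ k) (hn : 0 < n)
    (h1 : n ^ 3 ≤ a) (hab : a < b) (hbc : b < c) (hcd : c < d) (hde : d < e)
    (hD : ∀ x ∈ ({a, b, c, d, e} : Finset ℕ), ∀ y ∈ ({a, b, c, d, e} : Finset ℕ),
      x ≠ y → ∃ z : ℕ, (x * y : ℤ) - n = (z : ℤ) ^ k) :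
    b ^ (k - 1) ≤ e := by
  by_contra! he
  have hnb : n < b := by linarith [Nat.le_self_pow (by norm_num : 3 ≠ 0) n]
  have hpow : ∀ x ∈ ({a, b, c, d, e} : Finset ℕ), ∀ y ∈ ({a, b, c, d, e} : Finset ℕ),
      x ≠ y → ∃ z : ℕ, x * y = z ^ k + n := fun x hx y hy hxy =>
    (hD x hx y hy hxy).imp fun z hz => by zify; linarith
  obtain ⟨q, hq⟩ := hpow b (by simp) e (by simp) (by omega)
  obtain ⟨w, hw⟩ := hpow c (by simp) d (by simp) (by omega)
  obtain ⟨r, hr⟩ := hpow c (by simp) e (by simp) (by omega)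
  obtain ⟨v, hv⟩ := hpow b (by simp) d (by simp) (by omega)
  have hgap : k * (r * v) ^ (k - 1) ≤ n * ((c - b) * (e - d)) := by
    have hN : 0 < n * ((c - b) * (e - d)) := Nat.mul_pos hn (Nat.mul_pos (by omega) (by omega))
    refine mul_pow_pred_le_of_pow_eq_pow_add (y := q * w) hN ?_
    rw [mul_pow, mul_pow]
    exact mul_eq_mul_add_of_mul_eq_add hbc.le hde.le hq hw hr hv
  have hM : 3 * (r * v) ^ (k - 1) ≤ n * (c * e) :=
    calc 3 * (r * v) ^ (k - 1) ≤ k * (r * v) ^ (k - 1) := Nat.mul_le_mul_right _ hk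
      _ ≤ n * ((c - b) * (e - d)) := hgap
      _ ≤ n * (c * e) := by gcongr <;> omega
  have hP : 3 * (b * c * d * e) ≤ 5 * (r * v) ^ k := by
    rw [mul_pow]
    exact three_mul_le_five_mul_of_mul_eq_add hnb.le (by omega) (by omega) (by omega) hr hv
  have hP0 : 0 < b * c * d * e := Nat.pos_of_ne_zero (by simp only [ne_eq, mul_eq_zero]; omega)
  exact (pow_pred_lt_pow_of_three_mul_le (by omega) hM hP hP0).not_ge
    (pow_le_pow_pred_of_le_pow_pred hk (by omega) hcd.le he.le)
end

section
/- Let k ≥ 3 and m ≥ 5 be integers and n a positive integer. Suppose a₁ < a₂ < ... < a_m are positive integers with n³ ≤ a₁ such that the set {a₁, a₂, ..., a_m} has property D_k(−n). Then for every integer j with 1 ≤ j ≤ (m − 2)/3, one has a_{2+3j} ≥ a₂^((k−1)^j). -/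
lemma aux1 (K Y : ℕ) : K * Y^(K-1) + Y^K ≤ (Y+1)^K := by
  induction K with
  | zero => simp
  | succ K ih =>
    rcases Nat.eq_zero_or_pos K with h | h
    · subst h; simp; omega
    · have h1 : Y^(K-1) * Y = Y^K := by
        rw [← pow_succ]; congr 1; omega
      have h2 : (K+1) * Y^(K+1-1) + Y^(K+1) ≤ (K*Y^(K-1) + Y^K) * (Y+1) := by
        have h3 : K+1-1 = K := by omega
        rw [h3]
        calc (K+1) * Y^K + Y^(K+1) = K*(Y^(K-1)*Y) + Y^K + Y^K*Y := by
              rw [h1, pow_succ]; ring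
          _ ≤ (K*Y^(K-1) + Y^K) * (Y+1) := by nlinarith [pow_nonneg (Nat.zero_le Y) (K-1)]
      calc (K+1) * Y^(K+1-1) + Y^(K+1) ≤ (K*Y^(K-1) + Y^K) * (Y+1) := h2
        _ ≤ (Y+1)^K * (Y+1) := Nat.mul_le_mul_right _ ih
        _ = (Y+1)^(K+1) := by rw [← pow_succ]

lemma gap_lemma_s9 (k n a b c d : ℕ) (hk : 3 ≤ k) (hn : 0 < n) (ha : n ^ 3 ≤ a)
    (hab : a < b) (hbc : b < c) (hcd : c < d)
    (x y z w : ℕ)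
    (hx : (a * d : ℤ) - n = (x : ℤ) ^ k)
    (hy : (b * c : ℤ) - n = (y : ℤ) ^ k)
    (hz : (a * c : ℤ) - n = (z : ℤ) ^ k)
    (hw : (b * d : ℤ) - n = (w : ℤ) ^ k) :
    a ^ (k - 1) ≤ d := by
  obtain ⟨e, rfl⟩ : ∃ e, k = e + 3 := ⟨k - 3, by omega⟩
  have hk1 : e + 3 - 1 = e + 2 := by omega
  rw [hk1]
  have hna : n ≤ a := le_trans (Nat.le_self_pow (by norm_num) n) ha
  have ha1 : 1 ≤ a := le_trans hn hna
  obtain ⟨d', rfl⟩ : ∃ d', d = d' + 1 := ⟨d - 1, by omega⟩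
  have hd'3 : 3 ≤ d' := by omega
  -- ℕ versions of the power equations
  have hxe : a * (d'+1) = x ^ (e+3) + n := by
    have h := hx; push_cast at h
    exact_mod_cast (by linarith : ((a:ℤ) * ((d':ℤ)+1)) = (x:ℤ)^(e+3) + n)
  have hye : b * c = y ^ (e+3) + n := by
    have h := hy; push_cast at h
    exact_mod_cast (by linarith : ((b:ℤ) * c) = (y:ℤ)^(e+3) + n)
  have hze : a * c = z ^ (e+3) + n := by
    have h := hz; push_cast at h
    exact_mod_cast (by linarith : ((a:ℤ) * c) = (z:ℤ)^(e+3) + n)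
  have hwe : b * (d'+1) = w ^ (e+3) + n := by
    have h := hw; push_cast at h
    exact_mod_cast (by linarith : ((b:ℤ) * ((d':ℤ)+1)) = (w:ℤ)^(e+3) + n)
  -- key identity
  have keyZ : (x:ℤ)^(e+3) * (y:ℤ)^(e+3)
      = (z:ℤ)^(e+3) * (w:ℤ)^(e+3) + (n:ℤ) * (((b:ℤ)-a) * (((d':ℤ)+1)-c)) := by
    have h2 : ((b:ℤ)-a) * (((d':ℤ)+1)-c) * n
        = ((a:ℤ)*((d':ℤ)+1) - n)*((b:ℤ)*c - n) - ((a:ℤ)*c - n)*((b:ℤ)*((d':ℤ)+1) - n) := by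
      ring
    have hx' : ((a:ℤ)*((d':ℤ)+1) - n) = (x:ℤ)^(e+3) := by push_cast at hx ⊢; linarith
    have hw' : ((b:ℤ)*((d':ℤ)+1) - n) = (w:ℤ)^(e+3) := by push_cast at hw ⊢; linarith
    rw [hx', hy, hz, hw'] at h2
    linarith
  have key : (x*y)^(e+3) = (z*w)^(e+3) + n * ((b-a)*((d'+1)-c)) := by
    have hc1 : c ≤ d' + 1 := by omega
    zify [hab.le, hc1]
    push_cast
    rw [mul_pow, mul_pow]
    linarith [keyZ]
  -- lower bound for z^K * w^K
  have hCge : a * b ≤ z ^ (e+3) := by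
    have h5 : a*b + n ≤ a*c := by
      calc a*b + n ≤ a*b + a := by omega
        _ = a*(b+1) := by ring
        _ ≤ a*c := Nat.mul_le_mul_left a (by omega)
    linarith [hze]
  have hDge : b * d' ≤ w ^ (e+3) := by
    have h5 : b*d' + n ≤ b*(d'+1) := by
      have hnb : n ≤ b := by omega
      calc b*d' + n ≤ b*d' + b := by omega
        _ = b*(d'+1) := by ring
    linarith [hwe]
  have hprod : a * b^2 * d' ≤ (z*w) ^ (e+3) := by
    rw [mul_pow]
    calc a * b^2 * d' = (a*b) * (b*d') := by ring
      _ ≤ z^(e+3) * w^(e+3) := Nat.mul_le_mul hCge hDge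
  -- G bounds
  have hG1 : 1 ≤ (b-a)*((d'+1)-c) := by
    have : 1 ≤ b - a := by omega
    have : 1 ≤ (d'+1) - c := by omega
    exact Nat.one_le_iff_ne_zero.mpr (by positivity)
  have hGbd : (b-a)*((d'+1)-c) ≤ b*(d'+1) := Nat.mul_le_mul (by omega) (by omega)
  -- x*y > z*w
  have hlt : (z*w)^(e+3) < (x*y)^(e+3) := by
    have : 1 ≤ n * ((b-a)*((d'+1)-c)) := Nat.one_le_iff_ne_zero.mpr (by positivity)
    omega
  have hzwxy : z*w + 1 ≤ x*y := by
    have := lt_of_pow_lt_pow_left₀ (e+3) (Nat.zero_le (x*y)) hlt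
    omega
  -- main step 1 : (e+3) * (z*w)^(e+2) ≤ n*G
  have hmain1 : (e+3) * (z*w)^(e+2) ≤ n * ((b-a)*((d'+1)-c)) := by
    have h6 : (z*w)^(e+3) + (e+3)*(z*w)^(e+2) ≤ (x*y)^(e+3) := by
      have h7 := aux1 (e+3) (z*w)
      have h8 : e+3-1 = e+2 := by omega
      rw [h8] at h7
      calc (z*w)^(e+3) + (e+3)*(z*w)^(e+2) = (e+3)*(z*w)^(e+2) + (z*w)^(e+3) := by ring
        _ ≤ (z*w+1)^(e+3) := h7
        _ ≤ (x*y)^(e+3) := Nat.pow_le_pow_left hzwxy _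
    omega
  -- combine
  have hstep : (e+3) * (z*w)^(e+2) ≤ n * (b*(d'+1)) :=
    hmain1.trans (Nat.mul_le_mul_left n hGbd)
  have heq : ((e+3) * (z*w)^(e+2))^(e+3) = (e+3)^(e+3) * ((z*w)^(e+3))^(e+2) := by
    rw [mul_pow, ← pow_mul, ← pow_mul, Nat.mul_comm (e+2) (e+3)]
  have hmain2 : (e+3)^(e+3) * (a*b^2*d')^(e+2) ≤ (n*(b*(d'+1)))^(e+3) := by
    calc (e+3)^(e+3) * (a*b^2*d')^(e+2)
        ≤ (e+3)^(e+3) * ((z*w)^(e+3))^(e+2) :=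
          Nat.mul_le_mul_left _ (Nat.pow_le_pow_left hprod (e+2))
      _ = ((e+3) * (z*w)^(e+2))^(e+3) := heq.symm
      _ ≤ (n*(b*(d'+1)))^(e+3) := Nat.pow_le_pow_left hstep _
  have eq1 : (e+3)^(e+3) * (a*b^2*d')^(e+2)
      = b^(e+3) * ((e+3)^(e+3) * (a^(e+2) * b^(e+1) * d'^(e+2))) := by ring
  have eq2 : (n*(b*(d'+1)))^(e+3) = b^(e+3) * (n^(e+3) * (d'+1)^(e+3)) := by
    rw [mul_pow, mul_pow]; ring
  have hmain3 : (e+3)^(e+3) * (a^(e+2) * b^(e+1) * d'^(e+2)) ≤ n^(e+3) * (d'+1)^(e+3) := by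
    have hbpos : 0 < b^(e+3) := pow_pos (by omega) _
    exact Nat.le_of_mul_le_mul_left (by rw [← eq1, ← eq2]; exact hmain2) hbpos
  have hd2 : (d'+1)^(e+3) ≤ 2^(e+2) * d'^(e+2) * (d'+1) := by
    have h9 : (d'+1) ≤ 2*d' := by omega
    calc (d'+1)^(e+3) = (d'+1)^(e+2) * (d'+1) := by rw [← pow_succ]
      _ ≤ (2*d')^(e+2) * (d'+1) := Nat.mul_le_mul_right _ (Nat.pow_le_pow_left h9 _)
      _ = 2^(e+2) * d'^(e+2) * (d'+1) := by rw [mul_pow]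
  have hmain4 : (e+3)^(e+3) * (a^(e+2) * b^(e+1)) ≤ 2^(e+2) * (n^(e+3) * (d'+1)) := by
    have hdpos : 0 < d'^(e+2) := pow_pos (by omega) _
    apply Nat.le_of_mul_le_mul_left _ hdpos
    calc d'^(e+2) * ((e+3)^(e+3) * (a^(e+2)*b^(e+1)))
        = (e+3)^(e+3) * (a^(e+2)*b^(e+1)*d'^(e+2)) := by ring
      _ ≤ n^(e+3) * (d'+1)^(e+3) := hmain3
      _ ≤ n^(e+3) * (2^(e+2) * d'^(e+2) * (d'+1)) := Nat.mul_le_mul_left _ hd2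
      _ = d'^(e+2) * (2^(e+2) * (n^(e+3) * (d'+1))) := by ring
  have h2k : 2^(e+2) ≤ (e+3)^(e+3) :=
    le_trans (Nat.pow_le_pow_right (by norm_num) (by omega)) (Nat.pow_le_pow_left (by omega) _)
  have hmain5 : a^(e+2) * b^(e+1) ≤ n^(e+3) * (d'+1) := by
    have h2pos : 0 < 2^(e+2) := pow_pos (by norm_num) _
    apply Nat.le_of_mul_le_mul_left _ h2pos
    calc 2^(e+2) * (a^(e+2)*b^(e+1)) ≤ (e+3)^(e+3) * (a^(e+2)*b^(e+1)) :=
          Nat.mul_le_mul_right _ h2k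
      _ ≤ 2^(e+2) * (n^(e+3) * (d'+1)) := hmain4
  have hnb : n^(e+3) ≤ b^(e+1) := by
    calc n^(e+3) ≤ n^(3*(e+1)) := Nat.pow_le_pow_right hn (by omega)
      _ = (n^3)^(e+1) := by rw [← pow_mul]
      _ ≤ a^(e+1) := Nat.pow_le_pow_left ha _
      _ ≤ b^(e+1) := Nat.pow_le_pow_left (by omega) _
  have hnpos : 0 < n^(e+3) := pow_pos hn _
  apply Nat.le_of_mul_le_mul_left _ hnpos
  calc n^(e+3) * a^(e+2) = a^(e+2) * n^(e+3) := by ring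
    _ ≤ a^(e+2) * b^(e+1) := Nat.mul_le_mul_left _ hnb
    _ ≤ n^(e+3) * (d'+1) := hmain5


/-- super-exponential growth for D_k(−n). Let k ≥ 3, m ≥ 5, n > 0 and let
a₁ < a₂ < ... < a_m be positive integers with n³ ≤ a₁ such that {a₁,...,a_m} has
property D_k(−n). Then a_{2+3j} ≥ a₂^((k−1)^j) for 1 ≤ j ≤ (m−2)/3. -/
theorem stmt_9 (k m n : ℕ) (hk : 3 ≤ k) (hm : 5 ≤ m) (hn : 0 < n)
    (a : ℕ → ℕ) (hpos : ∀ i, 1 ≤ i → i ≤ m → 0 < a i)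
    (hmono : ∀ i j, 1 ≤ i → i < j → j ≤ m → a i < a j)
    (hfirst : n ^ 3 ≤ a 1)
    (hD : ∀ i j, 1 ≤ i → i < j → j ≤ m →
      ∃ c : ℕ, (a i * a j : ℤ) - n = (c : ℤ) ^ k) :
    ∀ j, 1 ≤ j → j ≤ (m - 2) / 3 → a 2 ^ ((k - 1) ^ j) ≤ a (2 + 3 * j) := by
  have key : ∀ j, 2 + 3 * j ≤ m → a 2 ^ ((k - 1) ^ j) ≤ a (2 + 3 * j) := by
    intro j
    induction j with
    | zero => intro _; simp
    | succ j ih =>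
      intro hjm
      have hjm' : 2 + 3 * j ≤ m := by omega
      have IH := ih hjm'
      set p := 2 + 3 * j with hp
      have hp1 : 1 ≤ p := by omega
      have hp3 : p + 3 ≤ m := by omega
      obtain ⟨x, hx⟩ := hD p (p+3) hp1 (by omega) hp3
      obtain ⟨y, hy⟩ := hD (p+1) (p+2) (by omega) (by omega) (by omega)
      obtain ⟨z, hz⟩ := hD p (p+2) hp1 (by omega) (by omega)
      obtain ⟨w, hw⟩ := hD (p+1) (p+3) (by omega) (by omega) hp3
      have hap : n ^ 3 ≤ a p :=
        le_trans hfirst (le_of_lt (hmono 1 p le_rfl (by omega) (by omega)))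
      have hgap : (a p) ^ (k-1) ≤ a (p+3) :=
        gap_lemma_s9 k n (a p) (a (p+1)) (a (p+2)) (a (p+3)) hk hn hap
          (hmono p (p+1) hp1 (by omega) (by omega))
          (hmono (p+1) (p+2) (by omega) (by omega) (by omega))
          (hmono (p+2) (p+3) (by omega) (by omega) hp3)
          x y z w hx hy hz hw
      have hidx : 2 + 3 * (j + 1) = p + 3 := by omega
      rw [hidx]
      calc a 2 ^ ((k-1) ^ (j+1)) = (a 2 ^ ((k-1) ^ j)) ^ (k-1) := by
            rw [← pow_mul, ← pow_succ]
        _ ≤ (a p) ^ (k-1) := Nat.pow_le_pow_left IH _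
        _ ≤ a (p+3) := hgap
  intro j hj1 hj2
  exact key j (by omega)
end

section
/- Let k ≥ 3 be an odd integer, L ≥ 3 an integer, and define c(k) = ∏_{j=1}^{(k−1)/2} sin²(2πj/k). Let n be a positive integer with n > 2^{1/(L−1)} · c(k)^{−1/(L−1)} (equivalently n^{L−1} > 2/c(k)). Let a₁ < a₂ be positive integers with n^L < a₁, and suppose x, u, v are positive integers satisfying a₁x − n = u^k and a₂x − n = v^k. Then |u/v − (a₁/a₂)^{1/k}| ≤ a₂/(2v^k), where (a₁/a₂)^{1/k} denotes the positive real k-th root of a₁/a₂. -/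
/-!
Put `r = a₁ / a₂` and `A = u / v`. The two equations give the exact gap
`r - A ^ k = n (a₂ - a₁) / (a₂ v ^ k) ≥ 0`, so `A` lies below the root `B = r ^ (1 / k) ≤ 1`.
Since `B - A ≤ (B ^ k - A ^ k) / B ^ (k - 1)` and `B ^ (k - 1) ≥ B ^ k = r`, the distance to the root
is at most `n (a₂ - a₁) / (a₁ v ^ k)`, which is `≤ a₂ / (2 v ^ k)` because `n ^ L < a₁` forces `2 n ≤ a₁`.
-/

lemma two_mul_le_of_pow_lt {n a L : ℕ} (hL : 2 ≤ L) (h : n ^ L < a) : 2 * n ≤ a := by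
  rcases Nat.eq_zero_or_pos n with rfl | hn
  · simp
  have hsq : n ^ 2 ≤ n ^ L := Nat.pow_le_pow_right hn hL
  nlinarith [sq_nonneg ((n : ℤ) - 1)]

lemma sub_mul_pow_pred_le_pow_sub_pow {R : Type*} [CommRing R] [LinearOrder R]
    [IsStrictOrderedRing R] {a b : R} (ha : 0 ≤ a) (hab : a ≤ b) {k : ℕ} (hk : k ≠ 0) :
    (b - a) * b ^ (k - 1) ≤ b ^ k - a ^ k := by
  obtain ⟨m, rfl⟩ := Nat.exists_eq_succ_of_ne_zero hk
  have : a * a ^ m ≤ a * b ^ m := mul_le_mul_of_nonneg_left (pow_le_pow_left₀ ha hab m) ha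
  rw [Nat.succ_sub_one, pow_succ', pow_succ']
  linarith

lemma abs_sub_rpow_one_div_le {r a : ℝ} {k : ℕ} (hk : k ≠ 0) (ha : 0 ≤ a) (hr : 0 < r)
    (hr1 : r ≤ 1) (har : a ^ k ≤ r) :
    |a - r ^ (1 / k : ℝ)| ≤ (r - a ^ k) / r := by
  set b := r ^ (1 / k : ℝ)
  have hb : 0 ≤ b := Real.rpow_nonneg hr.le _
  have hbk : b ^ k = r := by simp only [b, one_div, Real.rpow_inv_natCast_pow hr.le hk]
  have hab : a ≤ b := le_of_pow_le_pow_left₀ hk hb (hbk ▸ har)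
  have hb1 : b ≤ 1 := Real.rpow_le_one hr.le hr1 (by positivity)
  have hr_le : r ≤ b ^ (k - 1) := hbk ▸ pow_le_pow_of_le_one hb hb1 (Nat.sub_le k 1)
  rw [abs_sub_comm, abs_of_nonneg (sub_nonneg.2 hab), le_div_iff₀ hr]
  calc (b - a) * r ≤ (b - a) * b ^ (k - 1) := mul_le_mul_of_nonneg_left hr_le (sub_nonneg.2 hab)
    _ ≤ b ^ k - a ^ k := sub_mul_pow_pred_le_pow_sub_pow ha hab hk
    _ = r - a ^ k := by rw [hbk]

lemma div_sub_div_shift_eq {K : Type*} [Field K] {a₁ a₂ x n : K} (ha₂ : a₂ ≠ 0) (hV : a₂ * x - n ≠ 0) :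
    a₁ / a₂ - (a₁ * x - n) / (a₂ * x - n) = n * (a₂ - a₁) / (a₂ * (a₂ * x - n)) := by
  field_simp
  ring

theorem stmt_10_general (k L : ℕ) (hk : 3 ≤ k) (hL : 3 ≤ L) (n : ℕ)
    (a₁ a₂ : ℕ) (ha : n ^ L < a₁) (h12 : a₁ < a₂)
    (x u v : ℕ) (hv : 0 < v)
    (h1 : (a₁ * x : ℤ) - n = (u : ℤ) ^ k)
    (h2 : (a₂ * x : ℤ) - n = (v : ℤ) ^ k) :
    |(u : ℝ) / (v : ℝ) - ((a₁ : ℝ) / (a₂ : ℝ)) ^ ((1 : ℝ) / (k : ℝ))| ≤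
      (a₂ : ℝ) / (2 * (v : ℝ) ^ k) := by
  have h2n : (2 * n : ℝ) ≤ a₁ := by exact_mod_cast two_mul_le_of_pow_lt (by omega) ha
  have h12' : (a₁ : ℝ) < a₂ := by exact_mod_cast h12
  have ha₁ : (0 : ℝ) < a₁ := by exact_mod_cast (Nat.zero_le _).trans_lt ha
  have ha₂ : (0 : ℝ) < a₂ := ha₁.trans h12'
  have hvk : (0 : ℝ) < (v : ℝ) ^ k := by positivity
  have hU : (u : ℝ) ^ k = a₁ * x - n := by exact_mod_cast h1.symm
  have hV : (v : ℝ) ^ k = a₂ * x - n := by exact_mod_cast h2.symm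
  have hgap : (a₁ / a₂ : ℝ) - ((u : ℝ) / v) ^ k = n * (a₂ - a₁) / (a₂ * (v : ℝ) ^ k) := by
    rw [div_pow, hU, hV]
    exact div_sub_div_shift_eq ha₂.ne' (hV ▸ hvk.ne')
  have hgap_nonneg : 0 ≤ (a₁ / a₂ : ℝ) - ((u : ℝ) / v) ^ k := by
    rw [hgap]
    exact div_nonneg (mul_nonneg n.cast_nonneg (sub_nonneg.2 h12'.le)) (by positivity)
  calc |(u : ℝ) / v - ((a₁ : ℝ) / a₂) ^ ((1 : ℝ) / k)|
      ≤ ((a₁ / a₂ : ℝ) - ((u : ℝ) / v) ^ k) / (a₁ / a₂) :=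
        abs_sub_rpow_one_div_le (by omega) (by positivity) (by positivity)
          ((div_le_one ha₂).2 h12'.le) (sub_nonneg.1 hgap_nonneg)
    _ = n * (a₂ - a₁) / (a₁ * (v : ℝ) ^ k) := by
        rw [hgap]; field_simp
    _ ≤ a₂ / (2 * (v : ℝ) ^ k) := by
        have hnum : 2 * n * (a₂ - a₁ : ℝ) ≤ a₁ * a₂ := by
          nlinarith [mul_le_mul_of_nonneg_right h2n (sub_nonneg.2 h12'.le)]
        rw [div_le_div_iff₀ (by positivity) (by positivity)]
        nlinarith [mul_le_mul_of_nonneg_right hnum hvk.le]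

/-- Let k ≥ 3 be odd, L ≥ 3, c(k) = ∏_{j=1}^{(k−1)/2} sin²(2πj/k), and
let n be a positive integer with n > 2^{1/(L−1)}·c(k)^{−1/(L−1)}. If n^L < a₁ < a₂ and
x, u, v are positive integers with a₁x − n = u^k and a₂x − n = v^k, then
|u/v − (a₁/a₂)^{1/k}| ≤ a₂/(2v^k). -/
theorem stmt_10 (k L : ℕ) (hk : 3 ≤ k) (hodd : Odd k) (hL : 3 ≤ L)
    (n : ℕ) (hn : 0 < n)
    (hn2 : (2 : ℝ) ^ ((1 : ℝ) / ((L : ℝ) - 1)) *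
      (∏ j ∈ Finset.Icc 1 ((k - 1) / 2),
        Real.sin (2 * Real.pi * (j : ℝ) / (k : ℝ)) ^ 2) ^ (-(1 : ℝ) / ((L : ℝ) - 1))
      < (n : ℝ))
    (a₁ a₂ : ℕ) (ha : n ^ L < a₁) (h12 : a₁ < a₂)
    (x u v : ℕ) (hx : 0 < x) (hu : 0 < u) (hv : 0 < v)
    (h1 : (a₁ * x : ℤ) - n = (u : ℤ) ^ k)
    (h2 : (a₂ * x : ℤ) - n = (v : ℤ) ^ k) :
    |(u : ℝ) / (v : ℝ) - ((a₁ : ℝ) / (a₂ : ℝ)) ^ ((1 : ℝ) / (k : ℝ))| ≤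
      (a₂ : ℝ) / (2 * (v : ℝ) ^ k) :=
  stmt_10_general k L hk hL n a₁ a₂ ha h12 x u v hv h1 h2
end

section
/- Let k ≥ 3 be an odd integer, L ≥ 3 an integer, and define c(k) = ∏_{j=1}^{(k−1)/2} sin²(2πj/k). Let n be a positive integer with n > 2^{1/(L−1)} · c(k)^{−1/(L−1)}. Let S = {a₁ < a₂ < ... < a_m} be a set of positive integers with property D_k(−n), with m ≥ 14 and n^L < a₁. For each i with 3 ≤ i ≤ m, let u_i and v_i be the positive integers with u_i^k = a₁a_i − n and v_i^k = a₂a_i − n. Then for every i with 14 ≤ i ≤ m, one has v_i > a₂^4 and |u_i/v_i − (a₁/a₂)^{1/k}| < 1/v_i^{k−1/2}, where (a₁/a₂)^{1/k} denotes the positive real k-th root of a₁/a₂. -/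
/-!
The engine is the gap principle for `D_k(-n)`: if `p < q`, `r < s` and `pr - n = x^k`,
`qs - n = y^k`, `ps - n = w₁^k`, `qr - n = w₂^k`, then `(w₁w₂)^k - (xy)^k = n(q - p)(s - r)`
is positive and at most `n y^k`, yet at least `(xy)^(k-1)` since `w₁w₂ > xy` are integers;
hence `x^(k-1) ≤ n y`. Along the chain `a_i a_{i+2} - n`, `i = 3, …, 12`, this compounds into
`a_12 a_14 - n ≥ a_2^((k-1)^9)`, so `a_14 > a_2^(4k)`. For `i ≥ 14`, `u_i^k ≥ n^3 a_i` then
dominates `v_i^k ≤ a_2 a_i` enough to turn the elementary bound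
`|u_i/v_i - (a_1/a_2)^(1/k)| < n/(v_i u_i^(k-1))` into the claim.
-/

section OrderedRing

variable {R : Type*} [CommRing R] [LinearOrder R] [IsStrictOrderedRing R]

theorem sub_mul_pow_pred_le_pow_sub_pow_s11 {A B : R} {k : ℕ} (hk : k ≠ 0) (hA : 0 ≤ A)
    (hAB : A ≤ B) : (B - A) * A ^ (k - 1) ≤ B ^ k - A ^ k := by
  obtain ⟨l, rfl⟩ := Nat.exists_eq_succ_of_ne_zero hk
  have : B * A ^ l ≤ B * B ^ l :=
    mul_le_mul_of_nonneg_left (pow_le_pow_left₀ hA hAB l) (hA.trans hAB)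
  simp only [Nat.succ_sub_one, pow_succ']
  linarith

theorem pow_pow_mul_le_of_pow_pred_le {k : ℕ} (hk : 3 ≤ k) {n b : R} (hn : 1 ≤ n)
    (hb : 0 ≤ b) {X : ℕ → R} {T : ℕ} (h₀ : b * n ^ 3 ≤ X 0)
    (hstep : ∀ t < T, X t ^ (k - 1) ≤ n ^ k * X (t + 1)) :
    ∀ t ≤ T, b ^ ((k - 1) ^ t) * n ^ 3 ≤ X t := by
  intro t
  induction t with
  | zero => simpa using h₀
  | succ t ih =>
    intro ht
    have hX : b ^ ((k - 1) ^ t) * n ^ 3 ≤ X t := ih (by omega)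
    have hn_pow : n ^ k * n ^ 3 ≤ n ^ (3 * (k - 1)) := by
      rw [← pow_add]; exact pow_le_pow_right₀ hn (by omega)
    refine le_of_mul_le_mul_left ?_ (pow_pos (zero_lt_one.trans_le hn) k)
    calc n ^ k * (b ^ ((k - 1) ^ (t + 1)) * n ^ 3)
        = b ^ ((k - 1) ^ (t + 1)) * (n ^ k * n ^ 3) := by ring
      _ ≤ b ^ ((k - 1) ^ (t + 1)) * n ^ (3 * (k - 1)) := by gcongr
      _ = (b ^ ((k - 1) ^ t) * n ^ 3) ^ (k - 1) := by
          rw [mul_pow, ← pow_mul, ← pow_mul, pow_succ]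
      _ ≤ X t ^ (k - 1) := pow_le_pow_left₀ (by positivity) hX _
      _ ≤ n ^ k * X (t + 1) := hstep t (by omega)

theorem sq_mul_pow_lt_pow {k : ℕ} (hk : 2 ≤ k) {n b c u v : R} (hn : 1 ≤ n) (hb : 0 ≤ b)
    (hu : 0 ≤ u) (hv : 0 ≤ v) (huk : n ^ 3 * c ≤ u ^ k) (hvk : v ^ k ≤ b * c)
    (hbc : b ^ (2 * k - 3) < c) : n ^ 2 * v ^ (2 * k - 3) < u ^ (2 * k - 2) := by
  have hc : 0 < c := (pow_nonneg hb _).trans_lt hbc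
  refine lt_of_pow_lt_pow_left₀ k (by positivity) ?_
  calc (n ^ 2 * v ^ (2 * k - 3)) ^ k = n ^ (2 * k) * (v ^ k) ^ (2 * k - 3) := by
        rw [mul_pow, ← pow_mul, ← pow_mul, ← pow_mul, mul_comm (2 * k - 3)]
    _ ≤ n ^ (2 * k) * (b * c) ^ (2 * k - 3) := by gcongr
    _ = n ^ (2 * k) * (b ^ (2 * k - 3) * c ^ (2 * k - 3)) := by rw [mul_pow]
    _ < n ^ (2 * k) * (c * c ^ (2 * k - 3)) := by gcongr
    _ ≤ n ^ (6 * k - 6) * (c * c ^ (2 * k - 3)) := by gcongr; omega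
    _ = (n ^ 3 * c) ^ (2 * k - 2) := by
        rw [mul_pow, ← pow_mul, ← pow_succ', show 2 * k - 3 + 1 = 2 * k - 2 by omega,
          show 3 * (2 * k - 2) = 6 * k - 6 by omega]
    _ ≤ (u ^ k) ^ (2 * k - 2) := by gcongr
    _ = (u ^ (2 * k - 2)) ^ k := by rw [← pow_mul, ← pow_mul, mul_comm]

end OrderedRing

theorem pow_pred_le_mul_of_mul_sub_eq_pow {k : ℕ} (hk : k ≠ 0) {n p q r s : ℤ}
    {x y w₁ w₂ : ℕ} (hn : 0 < n) (hp : 0 ≤ p) (hr : 0 ≤ r) (hpq : p < q) (hrs : r < s)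
    (hx : p * r - n = (x : ℤ) ^ k) (hy : q * s - n = (y : ℤ) ^ k)
    (hw₁ : p * s - n = (w₁ : ℤ) ^ k) (hw₂ : q * r - n = (w₂ : ℤ) ^ k) :
    (x : ℤ) ^ (k - 1) ≤ n * y := by
  set A : ℤ := x * y
  set B : ℤ := w₁ * w₂
  have hBA : B ^ k - A ^ k = n * ((q - p) * (s - r)) := by
    simp only [A, B, mul_pow, ← hx, ← hy, ← hw₁, ← hw₂]; ring
  have hAB : A < B := by
    refine lt_of_pow_lt_pow_left₀ k (by positivity) ?_
    linarith [mul_pos hn (mul_pos (sub_pos.2 hpq) (sub_pos.2 hrs))]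
  have hxk : (0 : ℤ) ≤ (x : ℤ) ^ k := by positivity
  have hgap : (q - p) * (s - r) ≤ q * s - n := by
    nlinarith [mul_le_mul_of_nonneg_right hpq.le hr, mul_le_mul_of_nonneg_left hrs.le hp]
  have hy₀ : 0 < (y : ℤ) := by
    have : 0 < (y : ℤ) ^ k := by rw [← hy]; linarith [mul_lt_mul'' hpq hrs hp hr]
    exact_mod_cast Nat.pos_of_ne_zero (by rintro rfl; simp [hk] at this)
  refine le_of_mul_le_mul_right ?_ (pow_pos hy₀ (k - 1))
  calc (x : ℤ) ^ (k - 1) * (y : ℤ) ^ (k - 1)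
        = A ^ (k - 1) := (mul_pow _ _ _).symm
    _ ≤ (B - A) * A ^ (k - 1) := le_mul_of_one_le_left (by positivity) (by linarith)
    _ ≤ B ^ k - A ^ k := sub_mul_pow_pred_le_pow_sub_pow_s11 hk (by positivity) hAB.le
    _ = n * ((q - p) * (s - r)) := hBA
    _ ≤ n * (q * s - n) := by gcongr
    _ = n * y * (y : ℤ) ^ (k - 1) := by
        rw [hy, mul_assoc, ← pow_succ', Nat.sub_add_cancel (Nat.one_le_iff_ne_zero.2 hk)]

section Sequence

variable {k m n : ℕ} {a : ℕ → ℕ}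

theorem mul_add_two_sub_pow_pred_le (hk : k ≠ 0) (hn : 0 < n)
    (hmono : ∀ i j, 1 ≤ i → i < j → j ≤ m → a i < a j)
    (hD : ∀ i j, 1 ≤ i → i < j → j ≤ m →
      ∃ c : ℕ, (a i * a j : ℤ) - n = (c : ℤ) ^ k)
    {i : ℕ} (hi : 1 ≤ i) (him : i + 3 ≤ m) :
    ((a i * a (i + 2) : ℤ) - n) ^ (k - 1) ≤
      (n : ℤ) ^ k * ((a (i + 1) * a (i + 3) : ℤ) - n) := by
  obtain ⟨x, hx⟩ := hD i (i + 2) hi (by omega) (by omega)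
  obtain ⟨y, hy⟩ := hD (i + 1) (i + 3) (by omega) (by omega) him
  obtain ⟨w₁, hw₁⟩ := hD i (i + 3) hi (by omega) him
  obtain ⟨w₂, hw₂⟩ := hD (i + 1) (i + 2) (by omega) (by omega) (by omega)
  have hxy := pow_pred_le_mul_of_mul_sub_eq_pow hk (by exact_mod_cast hn) (Nat.cast_nonneg _)
    (Nat.cast_nonneg _) (by exact_mod_cast hmono i (i + 1) hi (by omega) (by omega))
    (by exact_mod_cast hmono (i + 2) (i + 3) (by omega) (by omega) him) hx hy hw₁ hw₂
  rw [hx, hy, ← pow_mul, mul_comm, pow_mul, ← mul_pow]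
  exact pow_le_pow_left₀ (by positivity) hxy k

theorem apply_two_pow_four_mul_lt_apply_fourteen (hk : 3 ≤ k) (hn : 0 < n) (hm : 14 ≤ m)
    (hmono : ∀ i j, 1 ≤ i → i < j → j ≤ m → a i < a j)
    (hD : ∀ i j, 1 ≤ i → i < j → j ≤ m →
      ∃ c : ℕ, (a i * a j : ℤ) - n = (c : ℤ) ^ k)
    (ha₁ : n ^ 3 < a 1) : a 2 ^ (4 * k) < a 14 := by
  have ha : ∀ i j, 1 ≤ i → i < j → j ≤ m → (a i : ℤ) < a j := fun i j hi hij hj ↦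
    by exact_mod_cast hmono i j hi hij hj
  have ha₁₂ := ha 1 2 le_rfl one_lt_two (by omega)
  have ha₂₃ := ha 2 3 (by omega) (by omega) (by omega)
  have ha₃₅ := ha 3 5 (by omega) (by omega) (by omega)
  have ha₁₂₁₄ := ha 12 14 (by omega) (by omega) hm
  have ha₁' : (n : ℤ) ^ 3 < a 1 := by exact_mod_cast ha₁
  have hn' : (1 : ℤ) ≤ n := by exact_mod_cast hn
  have hn₃ : (n : ℤ) ≤ n ^ 3 := le_self_pow₀ hn' (by norm_num)
  let X : ℕ → ℤ := fun t ↦ a (t + 3) * a (t + 5) - n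
  have h₀ : (a 2 : ℤ) * n ^ 3 ≤ X 0 := by
    simp only [X]
    nlinarith [mul_le_mul (show (a 2 : ℤ) + 1 ≤ a 3 by omega)
      (show (a 2 : ℤ) + 2 ≤ a 5 by omega) (by positivity) (by positivity)]
  have hstep : ∀ t < 9, X t ^ (k - 1) ≤ n ^ k * X (t + 1) := fun t ht ↦
    mul_add_two_sub_pow_pred_le (k := k) (by omega) hn hmono hD (i := t + 3) (by omega) (by omega)
  have h₉ := pow_pow_mul_le_of_pow_pred_le hk hn' (by positivity) h₀ hstep 9 le_rfl
  have hexp : 2 * (4 * k) ≤ (k - 1) ^ 9 := by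
    have : 2 ^ 8 * (k - 1) ≤ (k - 1) ^ 8 * (k - 1) := by gcongr; omega
    rw [pow_succ]; omega
  have hsq : ((a 2 : ℤ) ^ (4 * k)) ^ 2 < (a 14 : ℤ) ^ 2 :=
    calc ((a 2 : ℤ) ^ (4 * k)) ^ 2 ≤ (a 2 : ℤ) ^ ((k - 1) ^ 9) := by
          rw [← pow_mul, mul_comm]; exact pow_le_pow_right₀ (by omega) hexp
      _ ≤ (a 2 : ℤ) ^ ((k - 1) ^ 9) * n ^ 3 :=
          le_mul_of_one_le_right (by positivity) (one_le_pow₀ hn')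
      _ ≤ a 12 * a 14 - n := h₉
      _ < a 14 ^ 2 := by nlinarith
  exact_mod_cast lt_of_pow_lt_pow_left₀ 2 (by positivity) hsq

end Sequence

theorem abs_div_sub_rpow_lt {k : ℕ} (hk : k ≠ 0) {n a b c u v : ℝ} (hn : 0 < n)
    (ha : 0 < a) (hab : a < b) (hu : 0 < u) (hv : 0 < v) (huk : u ^ k = a * c - n)
    (hvk : v ^ k = b * c - n) :
    |u / v - (a / b) ^ (1 / k : ℝ)| < n / (v * u ^ (k - 1)) := by
  have hb : 0 < b := ha.trans hab
  set α := (a / b) ^ (1 / k : ℝ)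
  set t := u / v
  have hα : 0 ≤ α := by positivity
  have hαk : α ^ k = a / b := by
    simp only [α, one_div]; exact Real.rpow_inv_natCast_pow (by positivity) hk
  have hdiff : α ^ k - t ^ k = n * (b - a) / (b * v ^ k) := by
    have : b * c - n ≠ 0 := hvk ▸ (pow_pos hv k).ne'
    rw [hαk, div_pow, huk, hvk]; field_simp; ring
  have hdiff_pos : 0 < α ^ k - t ^ k := by
    rw [hdiff]; have := sub_pos.2 hab; positivity
  have hdiff_lt : α ^ k - t ^ k < n / v ^ k := by
    rw [hdiff, div_lt_div_iff₀ (by positivity) (by positivity)]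
    nlinarith [mul_pos hn ha, pow_pos hv k]
  have htα : t < α := lt_of_pow_lt_pow_left₀ k hα (by linarith)
  have ht : t ^ (k - 1) * v ^ k = v * u ^ (k - 1) := by
    obtain ⟨l, rfl⟩ := Nat.exists_eq_succ_of_ne_zero hk
    rw [Nat.succ_sub_one, div_pow, pow_succ]; field_simp
  rw [abs_sub_comm, abs_of_pos (sub_pos.2 htα), lt_div_iff₀ (by positivity), ← ht,
    ← mul_assoc, ← lt_div_iff₀ (by positivity)]
  exact (sub_mul_pow_pred_le_pow_sub_pow_s11 hk (by positivity) htα.le).trans_lt hdiff_lt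

theorem div_mul_pow_le_one_div_rpow {k : ℕ} (hk : 2 ≤ k) {n u v : ℝ} (hu : 0 < u)
    (hv : 0 < v) (h : n ^ 2 * v ^ (2 * k - 3) ≤ u ^ (2 * k - 2)) :
    n / (v * u ^ (k - 1)) ≤ 1 / v ^ ((k : ℝ) - 1 / 2) := by
  have hsq : (v ^ ((k : ℝ) - 1 / 2)) ^ 2 = v ^ (2 * k - 3) * v ^ 2 := by
    rw [← pow_add, ← Real.rpow_natCast, ← Real.rpow_natCast, ← Real.rpow_mul hv.le]
    congr 1; push_cast [show 3 ≤ 2 * k by omega]; ring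
  rw [div_le_div_iff₀ (by positivity) (by positivity), one_mul]
  refine le_of_pow_le_pow_left₀ two_ne_zero (by positivity) ?_
  calc (n * v ^ ((k : ℝ) - 1 / 2)) ^ 2 = n ^ 2 * v ^ (2 * k - 3) * v ^ 2 := by
        rw [mul_pow, hsq, mul_assoc]
    _ ≤ u ^ (2 * k - 2) * v ^ 2 := by gcongr
    _ = (v * u ^ (k - 1)) ^ 2 := by
        rw [mul_pow, ← pow_mul, show (k - 1) * 2 = 2 * k - 2 by omega, mul_comm]

theorem stmt_11_general (k L m n : ℕ) (hk : 3 ≤ k) (hL : 3 ≤ L)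
    (hm : 14 ≤ m) (hn : 0 < n)
    (a u v : ℕ → ℕ)
    (hmono : ∀ i j, 1 ≤ i → i < j → j ≤ m → a i < a j)
    (hfirst : n ^ L < a 1)
    (hD : ∀ i j, 1 ≤ i → i < j → j ≤ m →
      ∃ c : ℕ, (a i * a j : ℤ) - n = (c : ℤ) ^ k)
    (huv : ∀ i, 3 ≤ i → i ≤ m → 0 < u i ∧ 0 < v i ∧
      ((u i : ℤ)) ^ k = (a 1 * a i : ℤ) - n ∧ ((v i : ℤ)) ^ k = (a 2 * a i : ℤ) - n) :
    ∀ i, 14 ≤ i → i ≤ m →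
      ((a 2 : ℝ)) ^ 4 < (v i : ℝ) ∧
      |(u i : ℝ) / (v i : ℝ) - ((a 1 : ℝ) / (a 2 : ℝ)) ^ ((1 : ℝ) / (k : ℝ))| <
        1 / (v i : ℝ) ^ ((k : ℝ) - 1 / 2) := by
  intro j hj hjm
  obtain ⟨hu, hv, hu_pow, hv_pow⟩ := huv j (by omega) hjm
  have ha₁ : n ^ 3 < a 1 := (Nat.pow_le_pow_right hn hL).trans_lt hfirst
  have ha₂ : a 2 ^ (4 * k) < a j := by
    refine (apply_two_pow_four_mul_lt_apply_fourteen hk hn hm hmono hD ha₁).trans_le ?_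
    rcases hj.eq_or_lt with rfl | hj
    exacts [le_rfl, (hmono 14 j (by omega) hj hjm).le]
  have ha₁₂ : a 1 < a 2 := hmono 1 2 le_rfl one_lt_two (by omega)
  have hnj : n < a j := (Nat.le_self_pow three_ne_zero n).trans_lt (ha₁.trans (ha₁₂.trans
    ((Nat.le_self_pow (by omega) _).trans_lt ha₂)))
  have hu_pow' : (u j : ℝ) ^ k = a 1 * a j - n := by exact_mod_cast hu_pow
  have hv_pow' : (v j : ℝ) ^ k = a 2 * a j - n := by exact_mod_cast hv_pow
  have hnj' : (n : ℝ) < a j := by exact_mod_cast hnj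
  have ha₂' : (2 : ℝ) ≤ a 2 := by norm_cast; omega
  refine ⟨lt_of_pow_lt_pow_left₀ k (by positivity) ?_, ?_⟩
  · have : ((a 2 : ℝ) ^ 4) ^ k < a j := by rw [← pow_mul]; exact_mod_cast ha₂
    nlinarith
  have hbc : (a 2 : ℝ) ^ (2 * k - 3) < a j := by
    exact_mod_cast (Nat.pow_le_pow_right (by omega) (by omega)).trans_lt ha₂
  have huk : (n : ℝ) ^ 3 * a j ≤ u j ^ k := by
    have : (n : ℝ) ^ 3 + 1 ≤ a 1 := by exact_mod_cast ha₁
    nlinarith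
  calc _ < (n : ℝ) / (v j * u j ^ (k - 1)) :=
        abs_div_sub_rpow_lt (by omega) (by positivity) (by exact_mod_cast Nat.zero_lt_of_lt ha₁)
          (by exact_mod_cast ha₁₂) (by positivity) (by positivity) hu_pow' hv_pow'
    _ ≤ _ := div_mul_pow_le_one_div_rpow (by omega) (by positivity) (by positivity)
        (sq_mul_pow_lt_pow (by omega) (by exact_mod_cast hn) (by positivity) (by positivity)
          (by positivity) huk (by linarith) hbc).le

/-- Let k ≥ 3 be odd, L ≥ 3, c(k) = ∏_{j=1}^{(k−1)/2} sin²(2πj/k), and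
let n be a positive integer with n > 2^{1/(L−1)}·c(k)^{−1/(L−1)}. Let
a₁ < a₂ < ... < a_m be positive integers with property D_k(−n), m ≥ 14, n^L < a₁, and
for 3 ≤ i ≤ m let u_i, v_i be the positive integers with u_i^k = a₁a_i − n and
v_i^k = a₂a_i − n. Then for 14 ≤ i ≤ m we have v_i > a₂^4 and
|u_i/v_i − (a₁/a₂)^{1/k}| < 1/v_i^{k−1/2}. -/
theorem stmt_11 (k L m n : ℕ) (hk : 3 ≤ k) (hodd : Odd k) (hL : 3 ≤ L)
    (hm : 14 ≤ m) (hn : 0 < n)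
    (hn2 : (2 : ℝ) ^ ((1 : ℝ) / ((L : ℝ) - 1)) *
      (∏ j ∈ Finset.Icc 1 ((k - 1) / 2),
        Real.sin (2 * Real.pi * (j : ℝ) / (k : ℝ)) ^ 2) ^ (-(1 : ℝ) / ((L : ℝ) - 1))
      < (n : ℝ))
    (a u v : ℕ → ℕ)
    (hpos : ∀ i, 1 ≤ i → i ≤ m → 0 < a i)
    (hmono : ∀ i j, 1 ≤ i → i < j → j ≤ m → a i < a j)
    (hfirst : n ^ L < a 1)
    (hD : ∀ i j, 1 ≤ i → i < j → j ≤ m →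
      ∃ c : ℕ, (a i * a j : ℤ) - n = (c : ℤ) ^ k)
    (huv : ∀ i, 3 ≤ i → i ≤ m → 0 < u i ∧ 0 < v i ∧
      ((u i : ℤ)) ^ k = (a 1 * a i : ℤ) - n ∧ ((v i : ℤ)) ^ k = (a 2 * a i : ℤ) - n) :
    ∀ i, 14 ≤ i → i ≤ m →
      ((a 2 : ℝ)) ^ 4 < (v i : ℝ) ∧
      |(u i : ℝ) / (v i : ℝ) - ((a 1 : ℝ) / (a 2 : ℝ)) ^ ((1 : ℝ) / (k : ℝ))| <
        1 / (v i : ℝ) ^ ((k : ℝ) - 1 / 2) :=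
  stmt_11_general k L m n hk hL hm hn a u v hmono hfirst hD huv
end

section
/- Let n be a positive integer and let a, b, c, d be positive integers with n³ ≤ a < b < c < d. Then abcd ≥ 2n(ac + bd) − 2n². -/
/-- if n > 0 and n³ ≤ a < b < c < d then abcd ≥ 2n(ac + bd) − 2n². -/
theorem stmt_14 (n a b c d : ℕ) (hn : 0 < n) (h1 : n ^ 3 ≤ a)
    (hab : a < b) (hbc : b < c) (hcd : c < d) :
    2 * (n : ℤ) * (a * c + b * d) - 2 * (n : ℤ) ^ 2 ≤ (a * b * c * d : ℤ) := by
  have hn' : (1 : ℤ) ≤ n := by exact_mod_cast hn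
  have ha : (n : ℤ) ^ 3 ≤ a := by exact_mod_cast h1
  have hab' : (a : ℤ) + 1 ≤ b := by exact_mod_cast hab
  have hbc' : (b : ℤ) + 1 ≤ c := by exact_mod_cast hbc
  have hcd' : (c : ℤ) + 1 ≤ d := by exact_mod_cast hcd
  have hn3 : (n : ℤ) ≤ (n : ℤ) ^ 3 := by
    calc (n : ℤ) = n ^ 1 := (pow_one _).symm
    _ ≤ n ^ 3 := pow_le_pow_right₀ hn' (by norm_num)
  have hx : 2 * (n : ℤ) + 1 ≤ a * c := by nlinarith
  have hy : 2 * (n : ℤ) + 2 * n ^ 2 ≤ b * d := by nlinarith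
  nlinarith [mul_le_mul hx hy (by nlinarith : (0:ℤ) ≤ 2 * (n:ℤ) + 2 * n ^ 2) (by nlinarith : (0:ℤ) ≤ (a:ℤ) * c)]
end
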